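/- arXiv:2103.16294 — 3 statements merged into one kernel-verified Lean document; each statement's English description precedes it below -/
import Mathlib

section
/- Let F be a field of characteristic zero, and let A, B ∈ Mat_V(F) be matrices with all entries in {0,1}. If there exists M ∈ 𝔓_V(F) with AM = MB, then A and B have the same number of nonzero entries. -/
/-- A matrix is doubly quasi-stochastic if all its row sums and column sums equal 1. -/
def DQS {V F : Type*} [Fintype V] [Field F] (A : Matrix V V F) : Prop :=
  (∀ u, ∑ w, A u w = 1) ∧ (∀ v, ∑ w, A w v = 1)

open scoped Classical in
theorem stmt_4 {V F : Type*} [Fintype V] [Field F] [CharZero F]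
    (A B M : Matrix V V F)
    (hA : ∀ u v, A u v = 0 ∨ A u v = 1) (hB : ∀ u v, B u v = 0 ∨ B u v = 1)
    (hM : DQS M) (h : A * M = M * B) :
    (Finset.univ.filter fun p : V × V => A p.1 p.2 ≠ 0).card =
      (Finset.univ.filter fun p : V × V => B p.1 p.2 ≠ 0).card := by
  classical
  have key : ∀ (C : Matrix V V F), (∀ u v, C u v = 0 ∨ C u v = 1) →
      ((Finset.univ.filter fun p : V × V => C p.1 p.2 ≠ 0).card : F) = ∑ u, ∑ v, C u v := by
    intro C hC
    have : ∑ u, ∑ v, C u v = ∑ p : V × V, C p.1 p.2 := by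
      rw [← Finset.univ_product_univ, Finset.sum_product]
    rw [this, ← Finset.sum_filter_ne_zero]
    rw [Finset.sum_congr rfl (fun p hp => ?_), Finset.sum_const, nsmul_eq_mul, mul_one]
    rcases hC p.1 p.2 with h0 | h1
    · exact absurd h0 (Finset.mem_filter.mp hp).2
    · exact h1
  have hAM : ∑ u, ∑ v, (A * M) u v = ∑ u, ∑ v, A u v := by
    simp only [Matrix.mul_apply]
    calc ∑ u, ∑ v, ∑ w, A u w * M w v
        = ∑ u, ∑ w, A u w * ∑ v, M w v := by
          simp_rw [Finset.mul_sum]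
          exact Finset.sum_congr rfl fun u _ => Finset.sum_comm
      _ = ∑ u, ∑ v, A u v := by simp [hM.1]
  have hMB : ∑ u, ∑ v, (M * B) u v = ∑ u, ∑ v, B u v := by
    simp only [Matrix.mul_apply]
    calc ∑ u, ∑ v, ∑ w, M u w * B w v
        = ∑ u, ∑ w, ∑ v, M u w * B w v :=
          Finset.sum_congr rfl fun u _ => Finset.sum_comm
      _ = ∑ w, ∑ u, ∑ v, M u w * B w v := Finset.sum_comm
      _ = ∑ w, (∑ u, M u w) * ∑ v, B w v := by simp_rw [Finset.sum_mul, Finset.mul_sum]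
      _ = ∑ u, ∑ v, B u v := by simp [hM.2]
  have : ((Finset.univ.filter fun p : V × V => A p.1 p.2 ≠ 0).card : F) =
      ((Finset.univ.filter fun p : V × V => B p.1 p.2 ≠ 0).card : F) := by
    rw [key A hA, key B hB, ← hAM, ← hMB, h]
  exact_mod_cast this
end

section
/- Let A, B ∈ Mat_V(F) be 0-1 matrices and suppose AM = MB for some M ∈ 𝔓_V(F). If all nonzero entries of A lie on the diagonal, and A is nonzero, then B is nonzero. -/
theorem stmt_5 {V F : Type*} [Fintype V] [Field F]
    (A B M : Matrix V V F)
    (hA01 : ∀ u v, A u v = 0 ∨ A u v = 1) (hB01 : ∀ u v, B u v = 0 ∨ B u v = 1)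
    (hdiag : ∀ u v, A u v ≠ 0 → u = v)
    (hM : DQS M) (h : A * M = M * B) (hA : A ≠ 0) : B ≠ 0 := by
  intro hB
  subst hB
  rw [Matrix.mul_zero] at h
  -- find a nonzero diagonal entry of A
  obtain ⟨u, v, huv⟩ : ∃ u v, A u v ≠ 0 := by
    by_contra hc
    push_neg at hc
    exact hA (by ext u v; simp [hc u v])
  obtain rfl := hdiag u v huv
  have hAuu : A u u = 1 := (hA01 u u).resolve_left huv
  -- then each entry of row u of M is zero
  have hMrow : ∀ w, M u w = 0 := by
    intro w
    have h0 : (A * M) u w = 0 := by rw [h]; rfl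
    rw [Matrix.mul_apply] at h0
    rw [Finset.sum_eq_single u] at h0
    · rwa [hAuu, one_mul] at h0
    · intro b _ hb
      have : A u b = 0 := by
        by_contra hne
        exact hb ((hdiag u b hne).symm)
      rw [this, zero_mul]
    · intro hmem; exact absurd (Finset.mem_univ u) hmem
  have := hM.1 u
  rw [Finset.sum_eq_zero (fun w _ => hMrow w)] at this
  exact zero_ne_one this
end

section
/- Let Γ be a graph on vertex set V, and fix k-tuples u, v ∈ V^k. Over a field F, consider the axioms Ax(Γ_{u→v}) consisting of: row sums ∑_u x_{uv} − 1, column sums ∑_u x_{vu} − 1, monomials x_{ab}x_{a'b'} whenever a↦a', b↦b' is not a local isomorphism of Γ, the Boolean axioms x_{ab}² − x_{ab}, and the polynomials x_{v_i u_i} − 1 for i ∈ [k]. Then for any w, z ∈ V^r and s ∈ V^t, the polynomials X_{wz}·(∑_{a∈V^t} X_{sa} − 1) and X_{wz}·(∑_{a∈V^t} X_{as} − 1) have NC derivations of degree at most t + r from these axioms, where X_{wz} denotes the monomial ∏_j x_{w_j z_j}. -/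
/-- `a ↦ b, a' ↦ b'` is a local isomorphism of `Γ`. -/
def LocalIso {V : Type*} (Γ : SimpleGraph V) (a b a' b' : V) : Prop :=
  (a = a' ↔ b = b') ∧ (Γ.Adj a a' ↔ Γ.Adj b b')

/-- The axioms `Ax(Γ)`: row sums, column sums, non-local-isomorphism monomials,
and Boolean axioms.  The variable `x (a, b)` represents mapping `a` to `b`. -/
def GraphAx {V : Type*} [Fintype V] (F : Type*) [Field F] (Γ : SimpleGraph V) :
    Set (MvPolynomial (V × V) F) :=
  {f | (∃ b : V, f = (∑ a : V, MvPolynomial.X (a, b)) - 1) ∨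
       (∃ b : V, f = (∑ a : V, MvPolynomial.X (b, a)) - 1) ∨
       (∃ a b a' b' : V, ¬ LocalIso Γ a b a' b' ∧
          f = MvPolynomial.X (a, b) * MvPolynomial.X (a', b')) ∨
       (∃ a b : V, f = MvPolynomial.X (a, b) ^ 2 - MvPolynomial.X (a, b))}

/-- The axioms `Ax(Γ_{u→v}) = Ax(Γ) ∪ {x_{v_i u_i} - 1 : i ∈ [k]}`. -/
def GraphAxUV {V : Type*} [Fintype V] (F : Type*) [Field F] (Γ : SimpleGraph V)
    {k : ℕ} (u v : Fin k → V) : Set (MvPolynomial (V × V) F) :=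
  GraphAx F Γ ∪ {f | ∃ i : Fin k, f = MvPolynomial.X (v i, u i) - 1}

/-- Degree-`d` Nullstellensatz calculus derivations from the axioms `Ax`:
`F`-linear combinations of monomial multiples `m · a` of axioms with `deg (m · a) ≤ d`. -/
def NCder {F σ : Type*} [Field F] (Ax : Set (MvPolynomial σ F)) (d : ℕ)
    (g : MvPolynomial σ F) : Prop :=
  g ∈ Submodule.span F {h : MvPolynomial σ F |
    ∃ a ∈ Ax, ∃ m : σ →₀ ℕ,
      h = MvPolynomial.monomial m (1 : F) * a ∧ h.totalDegree ≤ d}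


open MvPolynomial in
lemma prodX_eq_monomial {σ F : Type*} [Field F] :
    ∀ (n : ℕ) (p : Fin n → σ),
      (∏ j, (X (p j) : MvPolynomial σ F)) =
        monomial (∑ j, Finsupp.single (p j) 1) 1 := by
  intro n
  induction n with
  | zero => intro p; simp [monomial_zero']
  | succ n ih =>
      intro p
      rw [Fin.prod_univ_succ, Fin.sum_univ_succ, ih, X, monomial_mul, one_mul]

open MvPolynomial in
lemma key_span {σ V F : Type*} [Fintype V] [Field F] (Ax : Set (MvPolynomial σ F))
    (g : V → V → σ)
    (hax : ∀ c : V, ((∑ a : V, X (g c a)) - 1) ∈ Ax) :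
    ∀ (t : ℕ) {r : ℕ} (p : Fin r → σ) (s : Fin t → V),
      NCder Ax (t + r) ((∏ j, X (p j)) *
        ((∑ a : Fin t → V, ∏ j, X (g (s j) (a j))) - 1)) := by
  intro t
  induction t with
  | zero =>
      intro r p s
      have h1 : (∑ a : Fin 0 → V, ∏ j, (X (g (s j) (a j)) : MvPolynomial σ F)) = 1 := by
        simp
      rw [h1, sub_self, mul_zero]
      exact Submodule.zero_mem _
  | succ t ih =>
      intro r p s
      have hsum : (∑ a : Fin (t+1) → V, ∏ j, (X (g (s j) (a j)) : MvPolynomial σ F)) =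
          (∑ b : V, X (g (s 0) b)) *
            (∑ a : Fin t → V, ∏ j, X (g (s j.succ) (a j))) := by
        rw [← (Fin.consEquiv (fun _ : Fin (t+1) => V)).sum_comp, Fintype.sum_prod_type,
            Finset.sum_mul_sum]
        refine Finset.sum_congr rfl fun b _ => Finset.sum_congr rfl fun a _ => ?_
        rw [Fin.prod_univ_succ]
        simp [Fin.consEquiv]
      set S : MvPolynomial σ F := ∑ a : Fin t → V, ∏ j, X (g (s j.succ) (a j)) with hS
      have hdecomp : (∏ j, (X (p j) : MvPolynomial σ F)) *
          ((∑ a : Fin (t+1) → V, ∏ j, X (g (s j) (a j))) - 1) =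
          (∑ b : V, (X (g (s 0) b) * ∏ j, X (p j)) * (S - 1)) +
            (∏ j, X (p j)) * ((∑ b : V, X (g (s 0) b)) - 1) := by
        rw [hsum]
        rw [← Finset.sum_mul, ← Finset.sum_mul]
        ring
      rw [hdecomp]
      refine Submodule.add_mem _ (Submodule.sum_mem _ fun b _ => ?_) ?_
      · have := ih (Fin.cons (g (s 0) b) p : Fin (r+1) → σ) (fun j => s j.succ)
        have heq : (∏ j, (X ((Fin.cons (g (s 0) b) p : Fin (r+1) → σ) j) :
            MvPolynomial σ F)) = X (g (s 0) b) * ∏ j, X (p j) := by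
          rw [Fin.prod_univ_succ]; simp
        rw [heq] at this
        have hd : t + (r + 1) = t + 1 + r := by omega
        rw [hd] at this
        exact this
      · apply Submodule.subset_span
        refine ⟨(∑ b : V, X (g (s 0) b)) - 1, hax _, ∑ j, Finsupp.single (p j) 1, ?_, ?_⟩
        · rw [← prodX_eq_monomial]
        · refine (totalDegree_mul _ _).trans ?_
          have h1 : (∏ j, (X (p j) : MvPolynomial σ F)).totalDegree ≤ r := by
            refine (totalDegree_finset_prod _ _).trans ?_
            calc (∑ j : Fin r, (X (p j) : MvPolynomial σ F).totalDegree)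
                ≤ ∑ _j : Fin r, 1 := Finset.sum_le_sum fun j _ => (totalDegree_X _).le
              _ = r := by simp
          have h2 : ((∑ b : V, X (g (s 0) b)) - 1 : MvPolynomial σ F).totalDegree ≤ 1 := by
            rw [sub_eq_add_neg]
            refine (totalDegree_add _ _).trans (max_le ?_ ?_)
            · refine (totalDegree_finset_sum _ _).trans ?_
              exact Finset.sup_le fun b _ => (totalDegree_X _).le
            · rw [totalDegree_neg]
              simp [totalDegree_one]
          omega

theorem stmt_12 {V F : Type*} [Fintype V] [Field F]
    (Γ : SimpleGraph V) {k : ℕ} (u v : Fin k → V)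
    {r t : ℕ} (w z : Fin r → V) (s : Fin t → V) :
    NCder (GraphAxUV F Γ u v) (t + r)
      ((∏ j, MvPolynomial.X (w j, z j)) *
        ((∑ a : Fin t → V, ∏ j, MvPolynomial.X (s j, a j)) - 1)) ∧
    NCder (GraphAxUV F Γ u v) (t + r)
      ((∏ j, MvPolynomial.X (w j, z j)) *
        ((∑ a : Fin t → V, ∏ j, MvPolynomial.X (a j, s j)) - 1)) := by
  constructor
  · exact key_span (GraphAxUV F Γ u v) (fun c a => (c, a))
      (fun c => Or.inl (Or.inr (Or.inl ⟨c, rfl⟩))) t (fun j => (w j, z j)) s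
  · exact key_span (GraphAxUV F Γ u v) (fun c a => (a, c))
      (fun c => Or.inl (Or.inl ⟨c, rfl⟩)) t (fun j => (w j, z j)) s
end
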